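/- The 8×8 complex matrix U₃ = (S₀⊗I₂ + S₃⊗σ₁)⊗I₂ − 2·S₃⊗S₁⊗S₃ is unitary and has Schmidt rank exactly 3. -/
import Mathlib


open Matrix Kronecker Complex

/-- The tripartite Schmidt rank of an 8×8 complex matrix, viewed as a matrix on
ℂ² ⊗ ℂ² ⊗ ℂ² via Kronecker products: the least `r` such that
`U = ∑ j, A j ⊗ₖ (B j ⊗ₖ C j)` with 2×2 matrices `A j`, `B j`, `C j`. -/
noncomputable def sr (U : Matrix (Fin 2 × Fin 2 × Fin 2) (Fin 2 × Fin 2 × Fin 2) ℂ) : ℕ :=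
  sInf {r | ∃ A B C : Fin r → Matrix (Fin 2) (Fin 2) ℂ,
    U = ∑ j, A j ⊗ₖ (B j ⊗ₖ C j)}

def S0 : Matrix (Fin 2) (Fin 2) ℂ := !![1, 0; 0, 0]
def S1 : Matrix (Fin 2) (Fin 2) ℂ := !![0, 1; 0, 0]
def S2 : Matrix (Fin 2) (Fin 2) ℂ := !![0, 0; 1, 0]
def S3 : Matrix (Fin 2) (Fin 2) ℂ := !![0, 0; 0, 1]
def σ1 : Matrix (Fin 2) (Fin 2) ℂ := !![0, 1; 1, 0]
def σ2 : Matrix (Fin 2) (Fin 2) ℂ := !![0, -I; I, 0]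
def σ3 : Matrix (Fin 2) (Fin 2) ℂ := !![1, 0; 0, -1]
def I2 : Matrix (Fin 2) (Fin 2) ℂ := 1

/-- Reassociation `((ℂ²⊗ℂ²)⊗ℂ²) ≃ (ℂ²⊗(ℂ²⊗ℂ²))` at the level of matrix indices. -/
def matAssoc (M : Matrix ((Fin 2 × Fin 2) × Fin 2) ((Fin 2 × Fin 2) × Fin 2) ℂ) :
    Matrix (Fin 2 × Fin 2 × Fin 2) (Fin 2 × Fin 2 × Fin 2) ℂ :=
  Matrix.reindex (Equiv.prodAssoc (Fin 2) (Fin 2) (Fin 2))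
    (Equiv.prodAssoc (Fin 2) (Fin 2) (Fin 2)) M

/-- The CNOT gate as a 4×4 matrix. -/
def Tcnot : Matrix (Fin 2 × Fin 2) (Fin 2 × Fin 2) ℂ := S0 ⊗ₖ I2 + S3 ⊗ₖ σ1

noncomputable def U₃ : Matrix (Fin 2 × Fin 2 × Fin 2) (Fin 2 × Fin 2 × Fin 2) ℂ :=
  matAssoc ((S0 ⊗ₖ I2 + S3 ⊗ₖ σ1) ⊗ₖ I2) - (2 : ℂ) • (S3 ⊗ₖ (S1 ⊗ₖ S3))

/-- The decomposability predicate underlying `sr`. -/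
def srP (U : Matrix (Fin 2 × Fin 2 × Fin 2) (Fin 2 × Fin 2 × Fin 2) ℂ) (r : ℕ) : Prop :=
  ∃ A B C : Fin r → Matrix (Fin 2) (Fin 2) ℂ, U = ∑ j, A j ⊗ₖ (B j ⊗ₖ C j)

lemma srP_succ {U : Matrix (Fin 2 × Fin 2 × Fin 2) (Fin 2 × Fin 2 × Fin 2) ℂ} {r : ℕ}
    (h : srP U r) : srP U (r + 1) := by
  obtain ⟨A, B, C, h⟩ := h
  refine ⟨Fin.cons 0 A, Fin.cons 0 B, Fin.cons 0 C, ?_⟩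
  rw [h, Fin.sum_univ_succ]
  simp

lemma srP_mono {U : Matrix (Fin 2 × Fin 2 × Fin 2) (Fin 2 × Fin 2 × Fin 2) ℂ} {s t : ℕ}
    (hst : s ≤ t) (h : srP U s) : srP U t := by
  induction hst with
  | refl => exact h
  | step _ ih => exact srP_succ ih

set_option maxHeartbeats 2000000 in
lemma U₃_unitary : U₃ ∈ Matrix.unitaryGroup (Fin 2 × Fin 2 × Fin 2) ℂ := by
  rw [Matrix.mem_unitaryGroup_iff]
  ext ⟨a,b,c⟩ ⟨d,e,f⟩
  simp only [Matrix.mul_apply, Fintype.sum_prod_type, Fin.sum_univ_two, Matrix.star_apply,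
    U₃, matAssoc, Matrix.one_apply, I2, S0, S1, S3, σ1, Matrix.sub_apply, Matrix.smul_apply,
    Matrix.kroneckerMap_apply, Matrix.reindex_apply, Matrix.submatrix_apply, Equiv.prodAssoc,
    Matrix.add_apply]
  fin_cases a <;> fin_cases b <;> fin_cases c <;> fin_cases d <;> fin_cases e <;> fin_cases f <;>
    norm_num [Matrix.one_apply, star, Complex.ext_iff, Prod.ext_iff]

set_option maxHeartbeats 1000000 in
lemma U₃_rank_le : srP U₃ 3 := by
  refine ⟨![S0, S3, S3], ![I2, σ1, S1], ![I2, I2, (-2:ℂ) • S3], ?_⟩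
  ext ⟨a,b,c⟩ ⟨d,e,f⟩
  simp only [Fin.sum_univ_three, U₃, matAssoc, Matrix.one_apply, I2, S0, S1, S3, σ1,
    Matrix.sub_apply, Matrix.smul_apply, Matrix.kroneckerMap_apply, Matrix.reindex_apply,
    Matrix.submatrix_apply, Equiv.prodAssoc, Matrix.add_apply, Matrix.cons_val_zero,
    Matrix.cons_val_one, Matrix.head_cons, Matrix.cons_val_two, Matrix.tail_cons]
  fin_cases a <;> fin_cases b <;> fin_cases c <;> fin_cases d <;> fin_cases e <;> fin_cases f <;>
    norm_num [Matrix.one_apply, Complex.ext_iff, Prod.ext_iff]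

lemma U₃_not_rank_two : ¬ srP U₃ 2 := by
  rintro ⟨A, B, C, h⟩
  have hE : ∀ a b c d e f : Fin 2,
      A 0 a d * (B 0 b e * C 0 c f) + A 1 a d * (B 1 b e * C 1 c f) = U₃ (a,b,c) (d,e,f) := by
    intro a b c d e f
    have := congrFun (congrFun h (a,b,c)) (d,e,f)
    simpa [Fin.sum_univ_two, Matrix.sum_apply] using this.symm
  have uval : ∀ a b c d e f : Fin 2, U₃ (a,b,c) (d,e,f) =
      ((S0 a d) * (if b = e then 1 else 0) + (S3 a d) * (σ1 b e)) * (if c = f then 1 else 0)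
        - 2 * (S3 a d * (S1 b e * S3 c f)) := by
    intro a b c d e f
    simp [U₃, matAssoc, Matrix.one_apply, I2]
    try ring
  simp only [uval] at hE
  have E1 := hE 0 0 0 0 0 0
  have E3 := hE 0 0 0 0 1 0
  have E4 := hE 1 0 0 1 1 0
  have E5 := hE 0 0 1 0 1 1
  have E6 := hE 1 0 1 1 1 1
  have E7 := hE 0 1 0 0 0 0
  have E8 := hE 1 1 0 1 0 0
  have E9 := hE 0 1 1 0 0 1
  have E10 := hE 1 1 1 1 0 1
  norm_num [S0, S1, S3, σ1] at E1 E3 E4 E5 E6 E7 E8 E9 E10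
  set p1 := A 0 0 0; set p2 := A 1 0 0; set q1 := A 0 1 1; set q2 := A 1 1 1
  set D := p1 * q2 - p2 * q1 with hDdef
  have hA : D * (B 0 0 1 * C 0 0 0) = -p2 := by linear_combination q2 * E3 - p2 * E4
  have hB : D * (B 0 0 1 * C 0 1 1) = p2 := by linear_combination q2 * E5 - p2 * E6
  have hC : D * (B 0 1 0 * C 0 0 0) = -p2 := by linear_combination q2 * E7 - p2 * E8
  have hD : D * (B 0 1 0 * C 0 1 1) = -p2 := by linear_combination q2 * E9 - p2 * E10
  have hA' : D * (B 1 0 1 * C 1 0 0) = p1 := by linear_combination p1 * E4 - q1 * E3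
  have hB' : D * (B 1 0 1 * C 1 1 1) = -p1 := by linear_combination p1 * E6 - q1 * E5
  have hC' : D * (B 1 1 0 * C 1 0 0) = p1 := by linear_combination p1 * E8 - q1 * E7
  have hD' : D * (B 1 1 0 * C 1 1 1) = p1 := by linear_combination p1 * E10 - q1 * E9
  have h1 : (D * (B 0 0 1 * C 0 0 0)) * (D * (B 0 1 0 * C 0 1 1)) = -p2 * -p2 := by
    rw [hA, hD]
  have h2 : (D * (B 0 0 1 * C 0 1 1)) * (D * (B 0 1 0 * C 0 0 0)) = p2 * -p2 := by
    rw [hB, hC]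
  have hp2 : p2 = 0 := by
    have : p2 * p2 = 0 := by linear_combination (h2 - h1) / 2
    exact mul_self_eq_zero.mp this
  have h1' : (D * (B 1 0 1 * C 1 0 0)) * (D * (B 1 1 0 * C 1 1 1)) = p1 * p1 := by
    rw [hA', hD']
  have h2' : (D * (B 1 0 1 * C 1 1 1)) * (D * (B 1 1 0 * C 1 0 0)) = -p1 * p1 := by
    rw [hB', hC']
  have hp1 : p1 = 0 := by
    have : p1 * p1 = 0 := by linear_combination (h2' - h1') / 2
    exact mul_self_eq_zero.mp this
  rw [hp1, hp2] at E1
  simp at E1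

theorem stmt13 : U₃ ∈ Matrix.unitaryGroup (Fin 2 × Fin 2 × Fin 2) ℂ ∧ sr U₃ = 3 := by
  refine ⟨U₃_unitary, ?_⟩
  have h3 : srP U₃ 3 := U₃_rank_le
  refine le_antisymm (Nat.sInf_le h3) (le_csInf ⟨3, h3⟩ ?_)
  intro m hm
  by_contra hlt
  push_neg at hlt
  exact U₃_not_rank_two (srP_mono (by omega : m ≤ 2) hm)
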